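/- For a classical-quantum state ρ_XB with binary classical register X, H_max(X|B) ≤ log(1 + √(1 − (2 p_guess(X|B) − 1)²)), where p_guess(X|B) is the optimal probability of guessing X from measuring B. -/

import Mathlib

/-!
Write `T = ‖σ₀ - σ₁‖₁` and `F = ‖√σ₀ √σ₁‖₁`; since `2 p_guess - 1 = T`, the claim amounts to the
Fuchs–van de Graaf type bound `T² + 4F² ≤ (Tr σ₀ + Tr σ₁)²`. We prove it for `σ₀ = a aᴴ`,
`σ₁ = b bᴴ` in the Hilbert–Schmidt geometry. Let `S` be the sign of `σ₀ - σ₁` and `Mᴴ` the polar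
part of `aᴴ b`, and put `φ = b M`. Then `Re ⟪a, φ⟫ = F`, `φ φᴴ ≤ σ₁` and `‖a ± φ‖² = ‖a‖² + ‖φ‖² ± 2F`,
while `T = Tr S (σ₀ - σ₁) = Re ⟪a + φ, S (a - φ)⟫ - Tr S (σ₁ - φ φᴴ)` is at most
`‖a + φ‖ ‖a - φ‖ + Tr (σ₁ - φ φᴴ)`. The bound then follows by elementary algebra.
-/

open ComplexOrder

noncomputable def Matrix.PosSemidef.sqrt {𝕜 : Type*} [RCLike 𝕜] {n : Type*} [Fintype n]
    [DecidableEq n] {A : Matrix n n 𝕜} (hA : A.PosSemidef) : Matrix n n 𝕜 :=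
  (hA.1.eigenvectorUnitary : Matrix n n 𝕜) *
    Matrix.diagonal ((↑) ∘ (√·) ∘ hA.1.eigenvalues) *
    (star hA.1.eigenvectorUnitary : Matrix n n 𝕜)

noncomputable def traceNorm {n : Type*} [Fintype n] [DecidableEq n]
    (A : Matrix n n ℂ) : ℝ :=
  ((Matrix.posSemidef_conjTranspose_mul_self A).sqrt.trace).re

open scoped MatrixOrder

lemma sq_add_four_mul_re_inner_sq_le {𝕜 E : Type*} [RCLike 𝕜] [NormedAddCommGroup E]
    [InnerProductSpace 𝕜 E] (u v : E) {T N : ℝ} (hT : 0 ≤ T) (hN : ‖u‖ ^ 2 + ‖v‖ ^ 2 ≤ N)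
    (h : T ≤ ‖u + v‖ * ‖u - v‖ + (N - ‖u‖ ^ 2 - ‖v‖ ^ 2)) :
    T ^ 2 + 4 * RCLike.re (inner 𝕜 u v) ^ 2 ≤ N ^ 2 := by
  have hprod : (‖u + v‖ * ‖u - v‖) ^ 2
      = (‖u‖ ^ 2 + ‖v‖ ^ 2) ^ 2 - 4 * RCLike.re (inner 𝕜 u v) ^ 2 := by
    rw [mul_pow, norm_add_sq (𝕜 := 𝕜), norm_sub_sq (𝕜 := 𝕜)]
    ring
  have hamgm : ‖u + v‖ * ‖u - v‖ ≤ ‖u‖ ^ 2 + ‖v‖ ^ 2 := by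
    nlinarith [sq_nonneg (‖u + v‖ - ‖u - v‖), norm_add_sq (𝕜 := 𝕜) u v,
      norm_sub_sq (𝕜 := 𝕜) u v]
  nlinarith [pow_le_pow_left₀ hT h 2, mul_le_mul_of_nonneg_right hamgm (sub_nonneg.mpr hN),
    mul_nonneg (norm_nonneg (u + v)) (norm_nonneg (u - v))]

namespace Matrix

section Square

variable {n : Type*} [Fintype n]

lemma re_trace_mono {A B : Matrix n n ℂ} (h : A ≤ B) : A.trace.re ≤ B.trace.re := by
  have := (le_iff.mp h).trace_nonneg
  rw [trace_sub] at this
  simpa using (Complex.le_def.mp this).1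

variable [DecidableEq n]

lemma PosSemidef.sqrt_eq_cfcSqrt {A : Matrix n n ℂ} (hA : A.PosSemidef) :
    hA.sqrt = CFC.sqrt A := by
  rw [CFC.sqrt_eq_real_sqrt A hA.nonneg, cfcₙ_eq_cfc, hA.1.cfc_eq]
  rfl

lemma PosSemidef.conjTranspose_sqrt {A : Matrix n n ℂ} (hA : A.PosSemidef) :
    hA.sqrtᴴ = hA.sqrt := by
  rw [hA.sqrt_eq_cfcSqrt]
  exact (CFC.sqrt_nonneg A).isSelfAdjoint

lemma PosSemidef.sqrt_mul_sqrt {A : Matrix n n ℂ} (hA : A.PosSemidef) :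
    hA.sqrt * hA.sqrt = A := by
  rw [hA.sqrt_eq_cfcSqrt]
  exact CFC.sqrt_mul_sqrt_self A hA.nonneg

lemma traceNorm_eq_re_trace_abs (A : Matrix n n ℂ) : traceNorm A = (CFC.abs A).trace.re := by
  rw [traceNorm, PosSemidef.sqrt_eq_cfcSqrt, CFC.abs, star_eq_conjTranspose]

lemma traceNorm_nonneg (A : Matrix n n ℂ) : 0 ≤ traceNorm A := by
  simpa [traceNorm_eq_re_trace_abs] using re_trace_mono (CFC.abs_nonneg A)

lemma re_trace_mul_nonneg {A B : Matrix n n ℂ} (hA : 0 ≤ A) (hB : 0 ≤ B) :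
    0 ≤ (A * B).trace.re := by
  rw [← CFC.sqrt_mul_sqrt_self A, mul_assoc, trace_mul_comm, mul_assoc]
  simpa [mul_assoc] using re_trace_mono (conjugate_nonneg_of_nonneg hB (CFC.sqrt_nonneg A))

lemma re_trace_mul_le_of_le {S S' X : Matrix n n ℂ} (hSS' : S ≤ S') (hX : 0 ≤ X) :
    (S * X).trace.re ≤ (S' * X).trace.re := by
  have := re_trace_mul_nonneg (sub_nonneg.mpr hSS') hX
  rwa [Matrix.sub_mul, trace_sub, Complex.sub_re, sub_nonneg] at this

lemma IsHermitian.exists_sign {D : Matrix n n ℂ} (hD : D.IsHermitian) :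
    ∃ S : Matrix n n ℂ, S.IsHermitian ∧ S * S ≤ 1 ∧ -1 ≤ S ∧
      (S * D).trace.re = traceNorm D := by
  have hsa : IsSelfAdjoint D := hD
  have hsign : ContinuousOn Real.sign (spectrum ℝ D) := D.finite_real_spectrum.continuousOn _
  refine ⟨cfc Real.sign D, cfc_predicate Real.sign D, ?_, ?_, ?_⟩
  · rw [← cfc_mul _ _ D]
    refine cfc_le_one _ _ fun x _ => ?_
    rcases Real.sign_apply_eq x with h | h | h <;> simp [h]
  · simpa using algebraMap_le_cfc Real.sign (-1) D fun x _ => by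
      rcases Real.sign_apply_eq x with h | h | h <;> simp [h]
  · have hsign_mul : cfc Real.sign D * D = CFC.abs D := by
      nth_rw 2 [← cfc_id' ℝ D]
      rw [← cfc_mul _ _ D, CFC.abs_eq_cfc_norm D]
      refine cfc_congr fun x _ => ?_
      rcases lt_trichotomy x 0 with h | rfl | h
      · simp [Real.sign_of_neg h, abs_of_neg h]
      · simp
      · simp [Real.sign_of_pos h, abs_of_pos h]
    rw [hsign_mul, traceNorm_eq_re_trace_abs]

/- Since `0⁻¹ = 0` in `ℝ`, `cfc (·⁻¹) |K|` is the pseudo-inverse `|K|⁺`, so the witness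
`|K|⁺ Kᴴ` is the adjoint of the partial isometry `U` in the polar decomposition `K = U |K|`. -/
lemma exists_contraction_re_trace_mul_eq_traceNorm (K : Matrix n n ℂ) :
    ∃ M : Matrix n n ℂ, M * Mᴴ ≤ 1 ∧ (K * M).trace.re = traceNorm K := by
  set P := CFC.abs K
  have hP : IsSelfAdjoint P := (CFC.abs_nonneg K).isSelfAdjoint
  have hinv : ContinuousOn (·⁻¹ : ℝ → ℝ) (spectrum ℝ P) := P.finite_real_spectrum.continuousOn _
  have hPP : Kᴴ * K = cfc (fun x : ℝ => x * x) P := by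
    rw [cfc_mul _ _ P, cfc_id' ℝ P, CFC.abs_mul_abs, star_eq_conjTranspose]
  refine ⟨cfc (·⁻¹ : ℝ → ℝ) P * Kᴴ, ?_, ?_⟩
  · have hPinv : (cfc (·⁻¹ : ℝ → ℝ) P)ᴴ = cfc (·⁻¹ : ℝ → ℝ) P :=
      (cfc_predicate (·⁻¹ : ℝ → ℝ) P : IsSelfAdjoint _)
    rw [conjTranspose_mul, conjTranspose_conjTranspose, hPinv, mul_assoc, ← mul_assoc Kᴴ, hPP,
      ← cfc_mul _ _ P, ← cfc_mul _ _ P]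
    refine cfc_le_one _ _ fun x _ => ?_
    rcases eq_or_ne x 0 with rfl | hx
    · simp
    · field_simp; rfl
  · rw [← mul_assoc, trace_mul_cycle, hPP, ← cfc_mul _ _ P, traceNorm_eq_re_trace_abs]
    congr 3
    refine (cfc_congr fun x _ => ?_).trans (cfc_id' ℝ P)
    rcases eq_or_ne x 0 with rfl | hx
    · simp
    · field_simp

end Square

section HilbertSchmidt

variable {m n : Type*}

def toHilbertSchmidt (X : Matrix m n ℂ) : EuclideanSpace ℂ (m × n) :=
  WithLp.toLp 2 fun ij => X ij.1 ij.2

lemma toHilbertSchmidt_add (X Y : Matrix m n ℂ) :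
    toHilbertSchmidt (X + Y) = toHilbertSchmidt X + toHilbertSchmidt Y := rfl

lemma toHilbertSchmidt_sub (X Y : Matrix m n ℂ) :
    toHilbertSchmidt (X - Y) = toHilbertSchmidt X - toHilbertSchmidt Y := rfl

variable [Fintype m] [Fintype n]

lemma inner_toHilbertSchmidt (X Y : Matrix m n ℂ) :
    inner ℂ (toHilbertSchmidt X) (toHilbertSchmidt Y) = (Xᴴ * Y).trace := by
  simp only [toHilbertSchmidt, PiLp.inner_apply, RCLike.inner_apply, trace, diag, mul_apply,
    conjTranspose_apply, starRingEnd_apply, Fintype.sum_prod_type]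
  rw [Finset.sum_comm]
  exact Finset.sum_congr rfl fun _ _ => Finset.sum_congr rfl fun _ _ => mul_comm _ _

lemma norm_toHilbertSchmidt_sq (X : Matrix m n ℂ) :
    ‖toHilbertSchmidt X‖ ^ 2 = (X * Xᴴ).trace.re := by
  rw [← trace_mul_comm, ← inner_toHilbertSchmidt, inner_self_eq_norm_sq_to_K]
  norm_cast

lemma norm_toHilbertSchmidt_mul_le [DecidableEq m] {S : Matrix m m ℂ} (hS : S.IsHermitian)
    (hSS : S * S ≤ 1) (X : Matrix m n ℂ) :
    ‖toHilbertSchmidt (S * X)‖ ≤ ‖toHilbertSchmidt X‖ := by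
  rw [← pow_le_pow_iff_left₀ (norm_nonneg _) (norm_nonneg _) two_ne_zero,
    norm_toHilbertSchmidt_sq, norm_toHilbertSchmidt_sq, trace_mul_comm, trace_mul_comm X]
  have h := ((le_iff.mp hSS).conjTranspose_mul_mul_same X).trace_nonneg
  rw [Matrix.mul_sub, Matrix.sub_mul, Matrix.mul_one, trace_sub, sub_nonneg] at h
  rw [conjTranspose_mul, hS.eq, Matrix.mul_assoc, ← Matrix.mul_assoc S, ← Matrix.mul_assoc]
  exact (Complex.le_def.mp h).1

lemma re_trace_mul_sub_eq_re_inner {S : Matrix m m ℂ} (hS : S.IsHermitian)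
    (x y : Matrix m n ℂ) :
    (S * (x * xᴴ)).trace.re - (S * (y * yᴴ)).trace.re
      = RCLike.re (inner ℂ (toHilbertSchmidt (x + y)) (toHilbertSchmidt (S * (x - y)))) := by
  have hcross : (yᴴ * (S * x)).trace.re = (xᴴ * (S * y)).trace.re := by
    rw [← Complex.conj_re, starRingEnd_apply, ← trace_conjTranspose, conjTranspose_mul,
      conjTranspose_mul, hS.eq, conjTranspose_conjTranspose, Matrix.mul_assoc]
  have hsq (z : Matrix m n ℂ) : (S * (z * zᴴ)).trace = (zᴴ * (S * z)).trace := by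
    rw [← Matrix.mul_assoc, trace_mul_comm]
  rw [inner_toHilbertSchmidt, RCLike.re_to_complex, conjTranspose_add, Matrix.add_mul,
    Matrix.mul_sub, Matrix.mul_sub, Matrix.mul_sub, trace_add, trace_sub, trace_sub,
    Complex.add_re, Complex.sub_re, Complex.sub_re, hcross, hsq, hsq]
  ring

end HilbertSchmidt

variable {m n : Type*} [Fintype m] [Fintype n] [DecidableEq m] [DecidableEq n]

theorem traceNorm_sub_sq_add_four_mul_traceNorm_sq_le (a b : Matrix m n ℂ) :
    traceNorm (a * aᴴ - b * bᴴ) ^ 2 + 4 * traceNorm (aᴴ * b) ^ 2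
      ≤ ((a * aᴴ).trace.re + (b * bᴴ).trace.re) ^ 2 := by
  obtain ⟨S, hS, hSS, hS1, hST⟩ := ((isHermitian_mul_conjTranspose_self a).sub
    (isHermitian_mul_conjTranspose_self b)).exists_sign
  obtain ⟨M, hMM, hKM⟩ := exists_contraction_re_trace_mul_eq_traceNorm (aᴴ * b)
  set φ := b * M
  have hφb : 0 ≤ b * bᴴ - φ * φᴴ := by
    have hφ : φ * φᴴ = b * (M * Mᴴ) * bᴴ := by
      simp only [φ, conjTranspose_mul, Matrix.mul_assoc]
    rw [hφ, nonneg_iff_posSemidef]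
    simpa [Matrix.mul_sub, Matrix.sub_mul] using (le_iff.mp hMM).mul_mul_conjTranspose_same b
  have hfid : RCLike.re (inner ℂ (toHilbertSchmidt a) (toHilbertSchmidt φ))
      = traceNorm (aᴴ * b) := by
    rw [inner_toHilbertSchmidt, ← Matrix.mul_assoc, ← hKM]
    rfl
  rw [← hfid]
  refine sq_add_four_mul_re_inner_sq_le _ _ (traceNorm_nonneg _) ?_ ?_
  · rw [norm_toHilbertSchmidt_sq, norm_toHilbertSchmidt_sq]
    linarith [re_trace_mono (sub_nonneg.mp hφb)]
  · have hsplit : S * (a * aᴴ - b * bᴴ)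
        = S * (a * aᴴ) - S * (φ * φᴴ) - S * (b * bᴴ - φ * φᴴ) := by
      noncomm_ring
    have hoverlap : (S * (a * aᴴ)).trace.re - (S * (φ * φᴴ)).trace.re
        ≤ ‖toHilbertSchmidt (a + φ)‖ * ‖toHilbertSchmidt (a - φ)‖ := by
      rw [re_trace_mul_sub_eq_re_inner hS]
      exact (re_inner_le_norm _ _).trans
        (mul_le_mul_of_nonneg_left (norm_toHilbertSchmidt_mul_le hS hSS _) (norm_nonneg _))
    have hrest := re_trace_mul_le_of_le hS1 hφb
    rw [neg_one_mul, trace_neg, Complex.neg_re, trace_sub, Complex.sub_re] at hrest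
    rw [← hST, hsplit, trace_sub, trace_sub, Complex.sub_re, Complex.sub_re,
      norm_toHilbertSchmidt_sq, norm_toHilbertSchmidt_sq, ← toHilbertSchmidt_add,
      ← toHilbertSchmidt_sub]
    linarith

end Matrix

/-- H_max(X|B) ≤ log₂(1 + √(1 − (2 p_guess(X|B) − 1)²)) for a binary cq state. -/
theorem hmax_le_of_pguess
    {n : Type*} [Fintype n] [DecidableEq n]
    (σ₀ σ₁ : Matrix n n ℂ) (h₀ : σ₀.PosSemidef) (h₁ : σ₁.PosSemidef)
    (htr : σ₀.trace + σ₁.trace = 1) :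
    Real.logb 2 (1 + 2 * traceNorm (h₀.sqrt * h₁.sqrt))
      ≤ Real.logb 2 (1 + Real.sqrt
          (1 - (2 * (1 / 2 + traceNorm (σ₀ - σ₁) / 2) - 1) ^ 2)) := by
  have hbound := Matrix.traceNorm_sub_sq_add_four_mul_traceNorm_sq_le h₀.sqrt h₁.sqrt
  rw [h₀.conjTranspose_sqrt, h₁.conjTranspose_sqrt, h₀.sqrt_mul_sqrt, h₁.sqrt_mul_sqrt,
    ← Complex.add_re, htr, Complex.one_re, one_pow] at hbound
  have hF := Matrix.traceNorm_nonneg (h₀.sqrt * h₁.sqrt)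
  refine Real.logb_le_logb_of_le one_lt_two (by positivity) (add_le_add_right ?_ 1)
  refine Real.le_sqrt_of_sq_le ?_
  linarith
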